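/- Let a < b be real, λ ∈ (0,1], and let χ : ℝ → ℂ be Hölder continuous with exponent λ on [a,b] (i.e. there is c ≥ 0 with |χ(x) − χ(y)| ≤ c|x − y|^λ for x,y ∈ [a,b]). For K ∈ ℂ ∖ [a,b] define Φ(K) = (1/(2πi))∫_a^b χ(X)/(X − K) dX. Then for every t ∈ (a,b) the one-sided boundary values of Φ exist and satisfy the Plemelj formulas: lim_{ε→0⁺} Φ(t + iε) = (1/2)χ(t) + (1/(2πi))·PV∫_a^b χ(X)/(X − t) dX and lim_{ε→0⁺} Φ(t − iε) = −(1/2)χ(t) + (1/(2πi))·PV∫_a^b χ(X)/(X − t) dX, where the principal value is PV∫_a^b χ(X)/(X−t) dX := lim_{δ→0⁺} ( ∫_a^{t−δ} χ(X)/(X−t) dX + ∫_{t+δ}^b χ(X)/(X−t) dX ). -/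

import Mathlib

open intervalIntegral Filter Complex

/-!
Subtracting `χ t` splits the Cauchy integral into `∫ (χ X - χ t) / (X - K)` plus `χ t` times the
explicit kernel integral `log (b - K) - log (a - K)`. The Hölder condition at `t` dominates the
first integrand by `c * |X - t| ^ (lam - 1)`, integrable since `lam > 0`, uniformly for `K` on the
vertical line through `t`; so by dominated convergence it has the same limit from above, from
below and in the principal value. All the difference lies in the kernel: `log (a - K)` tends to
`log (t - a) ∓ π i` from the two sides of the cut, while the principal value of the real kernel is
`log (b - t) - log (t - a)`; dividing by `2 π i` gives the jumps `± χ t / 2`.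
-/

open MeasureTheory Set Topology Interval

lemma continuousOn_of_norm_sub_le_mul_abs_sub_rpow {E : Type*} [SeminormedAddCommGroup E]
    {f : ℝ → E} {s : Set ℝ} {c r : ℝ} (hr : 0 < r)
    (hf : ∀ x ∈ s, ∀ y ∈ s, ‖f x - f y‖ ≤ c * |x - y| ^ r) : ContinuousOn f s := by
  intro x hx
  have hbound : Tendsto (fun y => c * |y - x| ^ r) (𝓝[s] x) (𝓝 0) := by
    refine tendsto_nhdsWithin_of_tendsto_nhds (Continuous.tendsto' ?_ x _ ?_)
    · exact continuous_const.mul ((continuous_id.sub continuous_const).abs.rpow_const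
        fun _ => Or.inr hr.le)
    · simp [Real.zero_rpow hr.ne']
  rw [ContinuousWithinAt, tendsto_iff_norm_sub_tendsto_zero]
  exact squeeze_zero' (.of_forall fun _ => norm_nonneg _)
    (eventually_nhdsWithin_of_forall fun y hy => hf y hy x hx) hbound

lemma intervalIntegrable_abs_sub_rpow {r : ℝ} (hr : -1 < r) (t a b : ℝ) :
    IntervalIntegrable (fun x => |x - t| ^ r) volume a b := by
  have hloc : LocallyIntegrable (fun x : ℝ => |x| ^ r) volume :=
    locallyIntegrable_of_norm_le_rpow (C := 1) (α := -r) (by simp) (by simp; linarith)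
      (.of_forall fun x => by simp [Real.abs_rpow_of_nonneg (abs_nonneg x)])
      (measurable_id.abs.pow_const r).aestronglyMeasurable
  simpa using ((hloc.integrableOn_isCompact (isCompact_uIcc (a := a - t) (b := b - t))
    ).intervalIntegrable).comp_sub_right t

lemma norm_div_le_mul_rpow_sub_one {𝕜 : Type*} [NormedDivisionRing 𝕜] {u w : 𝕜} {c d lam : ℝ}
    (hc : 0 ≤ c) (hlam : 0 < lam) (hd : 0 ≤ d) (hu : ‖u‖ ≤ c * d ^ lam) (hdw : d ≤ ‖w‖) :
    ‖u / w‖ ≤ c * d ^ (lam - 1) := by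
  rcases hd.eq_or_lt with rfl | hd
  · have : u = 0 := norm_le_zero_iff.1 (by simpa [Real.zero_rpow hlam.ne'] using hu)
    simp only [this, zero_div, norm_zero]
    positivity
  calc ‖u / w‖ = ‖u‖ / ‖w‖ := norm_div u w
    _ ≤ c * d ^ lam / d := div_le_div₀ (by positivity) hu hd hdw
    _ = c * d ^ (lam - 1) := by rw [Real.rpow_sub_one hd.ne', mul_div_assoc]

lemma notMem_image_ofReal_of_im_ne_zero {K : ℂ} (hK : K.im ≠ 0) (s : Set ℝ) :
    K ∉ (fun x : ℝ => (x : ℂ)) '' s := by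
  rintro ⟨x, -, rfl⟩
  simp at hK

lemma ofReal_sub_ne_zero_of_im_ne_zero {K : ℂ} (hK : K.im ≠ 0) (x : ℝ) : (x : ℂ) - K ≠ 0 := by
  intro h
  exact hK (by simpa using congrArg im h)

lemma integral_one_div_ofReal_sub_of_im_ne_zero (a b : ℝ) {K : ℂ} (hK : K.im ≠ 0) :
    ∫ X in a..b, 1 / ((X : ℂ) - K) = log (b - K) - log (a - K) := by
  have hslit (X : ℝ) : (X : ℂ) - K ∈ slitPlane := Or.inr (by simpa using hK)
  refine integral_eq_sub_of_hasDerivAt (f := fun X : ℝ => log ((X : ℂ) - K)) (fun X _ => ?_) ?_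
  · simpa [one_div] using
      ((hasDerivAt_log (hslit X)).comp (X : ℂ) ((hasDerivAt_id _).sub_const K)).comp_ofReal
  · exact (continuous_const.div (by fun_prop)
      (ofReal_sub_ne_zero_of_im_ne_zero hK)).intervalIntegrable _ _

lemma integral_one_div_ofReal_sub_ofReal {u v t : ℝ} (ht : t ∉ uIcc u v) :
    ∫ X in u..v, 1 / ((X : ℂ) - t) = Real.log (v - t) - Real.log (u - t) := by
  have hne : ∀ X ∈ uIcc u v, X - t ≠ 0 := fun X hX h => ht (sub_eq_zero.1 h ▸ hX)
  refine integral_eq_sub_of_hasDerivAt (f := fun X : ℝ => ((Real.log (X - t) : ℝ) : ℂ))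
    (fun X hX => ?_) ?_
  · simpa [one_div] using ((Real.hasDerivAt_log (hne X hX)).comp X
      ((hasDerivAt_id X).sub_const t)).ofReal_comp
  · refine (continuousOn_const.div (by fun_prop) fun X hX => ?_).intervalIntegrable
    exact_mod_cast hne X hX

lemma integral_div_ofReal_sub_eq {u v : ℝ} {χ : ℝ → ℂ} (hχ : ContinuousOn χ (uIcc u v)) {K : ℂ}
    (hK : ∀ X ∈ uIcc u v, (X : ℂ) - K ≠ 0) (w : ℂ) :
    ∫ X in u..v, χ X / ((X : ℂ) - K) =
      (∫ X in u..v, (χ X - w) / ((X : ℂ) - K)) + w * ∫ X in u..v, 1 / ((X : ℂ) - K) := by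
  have hden : ContinuousOn (fun X : ℝ => (X : ℂ) - K) (uIcc u v) := by fun_prop
  rw [← intervalIntegral.integral_const_mul, ← intervalIntegral.integral_add]
  · refine integral_congr fun X hX => ?_
    field_simp [hK X hX]
    ring
  · exact ((hχ.sub continuousOn_const).div hden hK).intervalIntegrable
  · exact (continuousOn_const.mul (continuousOn_const.div hden hK)).intervalIntegrable

lemma tendsto_log_ofReal_sub_add_mul_I {a t : ℝ} (hat : a < t) :
    Tendsto (fun ε : ℝ => log (a - (t + ε * I))) (𝓝[>] 0)
      (𝓝 (Real.log (t - a) - Real.pi * I)) := by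
  have hlog := tendsto_log_nhdsWithin_im_neg_of_re_neg_of_im_zero (z := (a : ℂ) - t)
    (by simpa using hat) (by simp)
  rw [← ofReal_sub, norm_real, Real.norm_of_nonpos (by linarith), neg_sub] at hlog
  refine hlog.comp (tendsto_nhdsWithin_iff.2 ⟨?_, eventually_nhdsWithin_of_forall
    fun (ε : ℝ) (hε : ε ∈ Ioi 0) => show ((a : ℂ) - (t + ε * I)).im < 0 by
      simpa using mem_Ioi.1 hε⟩)
  exact tendsto_nhdsWithin_of_tendsto_nhds (Continuous.tendsto'
    (by fun_prop : Continuous fun ε : ℝ => (a : ℂ) - (t + ε * I)) _ _ (by simp))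

lemma tendsto_log_ofReal_sub_sub_mul_I {a t : ℝ} (hat : a < t) :
    Tendsto (fun ε : ℝ => log (a - (t - ε * I))) (𝓝[>] 0)
      (𝓝 (Real.log (t - a) + Real.pi * I)) := by
  have hlog := tendsto_log_nhdsWithin_im_nonneg_of_re_neg_of_im_zero (z := (a : ℂ) - t)
    (by simpa using hat) (by simp)
  rw [← ofReal_sub, norm_real, Real.norm_of_nonpos (by linarith), neg_sub] at hlog
  refine hlog.comp (tendsto_nhdsWithin_iff.2 ⟨?_, eventually_nhdsWithin_of_forall
    fun (ε : ℝ) (hε : ε ∈ Ioi 0) => show 0 ≤ ((a : ℂ) - (t - ε * I)).im by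
      simpa using (mem_Ioi.1 hε).le⟩)
  exact tendsto_nhdsWithin_of_tendsto_nhds (Continuous.tendsto'
    (by fun_prop : Continuous fun ε : ℝ => (a : ℂ) - (t - ε * I)) _ _ (by simp))

lemma integral_div_ofReal_sub_ofReal_eq {u v t : ℝ} {χ : ℝ → ℂ} (hχ : ContinuousOn χ (uIcc u v))
    (ht : t ∉ uIcc u v) :
    ∫ X in u..v, χ X / ((X : ℂ) - t) =
      (∫ X in u..v, (χ X - χ t) / ((X : ℂ) - t)) +
        χ t * (Real.log (v - t) - Real.log (u - t)) := by
  have hne (X : ℝ) (hX : X ∈ uIcc u v) : (X : ℂ) - t ≠ 0 :=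
    sub_ne_zero.2 (ofReal_injective.ne fun h => ht (h ▸ hX))
  rw [integral_div_ofReal_sub_eq hχ hne, integral_one_div_ofReal_sub_ofReal ht]

lemma tendsto_integral_div_ofReal_sub_principalValue {a b t : ℝ} {χ : ℝ → ℂ} (hat : a < t)
    (htb : t < b) (hχ : ContinuousOn χ (uIcc a b))
    (hg : IntervalIntegrable (fun X : ℝ => (χ X - χ t) / ((X : ℂ) - t)) volume a b) :
    Tendsto (fun δ : ℝ =>
        (∫ X in a..(t - δ), χ X / ((X : ℂ) - t)) + ∫ X in (t + δ)..b, χ X / ((X : ℂ) - t))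
      (𝓝[>] 0) (𝓝 ((∫ X in a..b, (χ X - χ t) / ((X : ℂ) - t)) +
        χ t * (Real.log (b - t) - Real.log (t - a)))) := by
  set g := fun X : ℝ => (χ X - χ t) / ((X : ℂ) - t)
  have hsmall : ∀ᶠ δ in 𝓝[>] (0 : ℝ), 0 < δ ∧ δ < t - a ∧ δ < b - t :=
    eventually_of_mem (Ioo_mem_nhdsGT (lt_min (sub_pos.2 hat) (sub_pos.2 htb)))
      fun δ hδ => ⟨hδ.1, lt_min_iff.1 hδ.2⟩
  have hmem {s : ℝ} (hs : a ≤ s ∧ s ≤ b) : s ∈ uIcc a b := by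
    rwa [uIcc_of_le (hat.trans htb).le]
  have hG : ContinuousWithinAt (fun x => ∫ X in a..x, g X) (uIcc a b) t :=
    continuousOn_primitive_interval' hg left_mem_uIcc t (hmem ⟨hat.le, htb.le⟩)
  have hleft : Tendsto (fun δ : ℝ => t - δ) (𝓝[>] 0) (𝓝[uIcc a b] t) :=
    tendsto_nhdsWithin_iff.2 ⟨tendsto_nhdsWithin_of_tendsto_nhds
      (Continuous.tendsto' (by fun_prop) _ _ (by simp)),
      hsmall.mono fun δ ⟨h0, ha, _⟩ => hmem ⟨by linarith, by linarith⟩⟩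
  have hright : Tendsto (fun δ : ℝ => t + δ) (𝓝[>] 0) (𝓝[uIcc a b] t) :=
    tendsto_nhdsWithin_iff.2 ⟨tendsto_nhdsWithin_of_tendsto_nhds
      (Continuous.tendsto' (by fun_prop) _ _ (by simp)),
      hsmall.mono fun δ ⟨h0, _, hb⟩ => hmem ⟨by linarith, by linarith⟩⟩
  have hlim := ((hG.tendsto.comp hleft).add ((tendsto_const_nhds (x := ∫ X in a..b, g X)).sub
    (hG.tendsto.comp hright))).add_const (χ t * (Real.log (b - t) - Real.log (t - a)))
  rw [add_sub_cancel] at hlim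
  refine hlim.congr' ?_
  filter_upwards [hsmall] with δ ⟨h0, ha, hb⟩
  have hl : t ∉ uIcc a (t - δ) := by
    rw [uIcc_of_le (by linarith)]; exact fun h => by linarith [h.2]
  have hr : t ∉ uIcc (t + δ) b := by
    rw [uIcc_of_le (by linarith)]; exact fun h => by linarith [h.1]
  have hl' : t - δ ∈ uIcc a b := hmem ⟨by linarith, by linarith⟩
  have hr' : t + δ ∈ uIcc a b := hmem ⟨by linarith, by linarith⟩
  rw [integral_div_ofReal_sub_ofReal_eq (hχ.mono (uIcc_subset_uIcc left_mem_uIcc hl')) hl,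
    integral_div_ofReal_sub_ofReal_eq (hχ.mono (uIcc_subset_uIcc hr' right_mem_uIcc)) hr,
    ← integral_interval_sub_left hg (hg.mono_set (uIcc_subset_uIcc left_mem_uIcc hr')),
    show t - δ - t = -δ by ring, show a - t = -(t - a) by ring, show t + δ - t = δ by ring,
    Real.log_neg_eq_log, Real.log_neg_eq_log]
  simp only [Function.comp_apply]
  ring

section HolderAtPoint

variable {a b t c lam : ℝ} {χ : ℝ → ℂ}

lemma norm_sub_div_ofReal_sub_le (hc : 0 ≤ c) (hlam : 0 < lam) {X : ℝ}
    (hX : ‖χ X - χ t‖ ≤ c * |X - t| ^ lam) {K : ℂ} (hK : K.re = t) :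
    ‖(χ X - χ t) / ((X : ℂ) - K)‖ ≤ c * |X - t| ^ (lam - 1) :=
  norm_div_le_mul_rpow_sub_one hc hlam (abs_nonneg _) hX
    (by simpa [hK] using abs_re_le_norm ((X : ℂ) - K))

lemma aestronglyMeasurable_sub_div_ofReal_sub (hχ : ContinuousOn χ (uIcc a b)) (w K : ℂ) :
    AEStronglyMeasurable (fun X : ℝ => (χ X - w) / ((X : ℂ) - K)) (volume.restrict (Ι a b)) :=
  (((hχ.mono uIoc_subset_uIcc).aestronglyMeasurable measurableSet_uIoc).sub
    aestronglyMeasurable_const).aemeasurable.div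
    (by fun_prop : Measurable fun X : ℝ => (X : ℂ) - K).aemeasurable |>.aestronglyMeasurable

variable (hχ : ContinuousOn χ (uIcc a b)) (hc : 0 ≤ c) (hlam : 0 < lam)
  (hχt : ∀ X ∈ uIcc a b, ‖χ X - χ t‖ ≤ c * |X - t| ^ lam)
include hχ hc hlam hχt

lemma intervalIntegrable_sub_div_ofReal_sub :
    IntervalIntegrable (fun X : ℝ => (χ X - χ t) / ((X : ℂ) - t)) volume a b :=
  ((intervalIntegrable_abs_sub_rpow (by linarith) t a b).const_mul c).mono_fun'
    (aestronglyMeasurable_sub_div_ofReal_sub hχ _ _)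
    (ae_restrict_of_forall_mem measurableSet_uIoc fun X hX =>
      norm_sub_div_ofReal_sub_le hc hlam (hχt X (uIoc_subset_uIcc hX)) (ofReal_re t))

lemma tendsto_integral_sub_div_ofReal_sub {ι : Type*} {l : Filter ι} [l.IsCountablyGenerated]
    {K : ι → ℂ} (hKre : ∀ᶠ i in l, (K i).re = t) (hK : Tendsto K l (𝓝 t)) :
    Tendsto (fun i => ∫ X in a..b, (χ X - χ t) / ((X : ℂ) - K i)) l
      (𝓝 (∫ X in a..b, (χ X - χ t) / ((X : ℂ) - t))) := by
  refine tendsto_integral_filter_of_dominated_convergence (fun X => c * |X - t| ^ (lam - 1))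
    (.of_forall fun i => aestronglyMeasurable_sub_div_ofReal_sub hχ _ _) ?_
    ((intervalIntegrable_abs_sub_rpow (by linarith) t a b).const_mul c) ?_
  · filter_upwards [hKre] with i hi
    exact .of_forall fun X hX =>
      norm_sub_div_ofReal_sub_le hc hlam (hχt X (uIoc_subset_uIcc hX)) hi
  · filter_upwards [compl_mem_ae_iff.2 (measure_singleton t)] with X (hX : X ≠ t) _
    exact tendsto_const_nhds.div (tendsto_const_nhds.sub hK) (sub_ne_zero.2 (by exact_mod_cast hX))

lemma tendsto_integral_div_ofReal_sub (htb : t < b) {ι : Type*} {l : Filter ι}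
    [l.IsCountablyGenerated] {K : ι → ℂ} (hKim : ∀ᶠ i in l, (K i).im ≠ 0)
    (hKre : ∀ᶠ i in l, (K i).re = t) (hK : Tendsto K l (𝓝 t)) {L : ℂ}
    (hL : Tendsto (fun i => log (a - K i)) l (𝓝 L)) :
    Tendsto (fun i => ∫ X in a..b, χ X / ((X : ℂ) - K i)) l
      (𝓝 ((∫ X in a..b, (χ X - χ t) / ((X : ℂ) - t)) + χ t * (Real.log (b - t) - L))) := by
  have hlogb : Tendsto (fun i => log (b - K i)) l (𝓝 (Real.log (b - t))) := by
    rw [ofReal_log (by linarith), ofReal_sub]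
    exact (continuousAt_clog (.inl (by simpa using htb))).tendsto.comp
      (tendsto_const_nhds.sub hK)
  refine ((tendsto_integral_sub_div_ofReal_sub hχ hc hlam hχt hKre hK).add
    ((hlogb.sub hL).const_mul (χ t))).congr' ?_
  filter_upwards [hKim] with i hi
  rw [integral_div_ofReal_sub_eq hχ (fun X _ => ofReal_sub_ne_zero_of_im_ne_zero hi X) (χ t),
    integral_one_div_ofReal_sub_of_im_ne_zero a b hi]

end HolderAtPoint

/-- Sokhotski–Plemelj formulas on the real interval [a,b]: for a Hölder
continuous density χ, the principal value PV∫_a^b χ(X)/(X−t) dX exists for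
t ∈ (a,b), and the one-sided boundary values of the Cauchy integral
Φ(K) = (1/2πi)∫_a^b χ(X)/(X−K) dX from the upper/lower half-plane are
±(1/2)χ(t) + (1/2πi)·PV∫_a^b χ(X)/(X−t) dX. -/
theorem plemelj_formula
    (a b : ℝ) (hab : a < b) (lam : ℝ) (hlam : lam ∈ Set.Ioc (0 : ℝ) 1)
    (χ : ℝ → ℂ) (c : ℝ) (hc : 0 ≤ c)
    (hHolder : ∀ x ∈ Set.Icc a b, ∀ y ∈ Set.Icc a b,
      ‖χ x - χ y‖ ≤ c * |x - y| ^ lam)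
    (Φ : ℂ → ℂ)
    (hΦ : ∀ K : ℂ, K ∉ ((fun x : ℝ => (x : ℂ)) '' Set.Icc a b) →
      Φ K = (1 / (2 * Real.pi * I)) * ∫ X in a..b, χ X / ((X : ℂ) - K)) :
    ∀ t ∈ Set.Ioo a b, ∃ pv : ℂ,
      Tendsto (fun δ : ℝ =>
          (∫ X in a..(t - δ), χ X / ((X : ℂ) - (t : ℂ))) +
            ∫ X in (t + δ)..b, χ X / ((X : ℂ) - (t : ℂ)))
        (nhdsWithin 0 (Set.Ioi 0)) (nhds pv) ∧
      Tendsto (fun ε : ℝ => Φ ((t : ℂ) + ε * I))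
        (nhdsWithin 0 (Set.Ioi 0))
        (nhds ((1 / 2) * χ t + (1 / (2 * Real.pi * I)) * pv)) ∧
      Tendsto (fun ε : ℝ => Φ ((t : ℂ) - ε * I))
        (nhdsWithin 0 (Set.Ioi 0))
        (nhds (-(1 / 2) * χ t + (1 / (2 * Real.pi * I)) * pv)) := by
  rintro t ⟨hat, htb⟩
  rw [← uIcc_of_le hab.le] at hHolder
  have hχ : ContinuousOn χ (uIcc a b) :=
    continuousOn_of_norm_sub_le_mul_abs_sub_rpow hlam.1 hHolder
  have hχt (X : ℝ) (hX : X ∈ uIcc a b) : ‖χ X - χ t‖ ≤ c * |X - t| ^ lam :=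
    hHolder X hX t (by rw [uIcc_of_le hab.le]; exact ⟨hat.le, htb.le⟩)
  have hboundary {K : ℝ → ℂ} {L : ℂ} (hKim : ∀ ε : ℝ, 0 < ε → (K ε).im ≠ 0)
      (hKre : ∀ ε, (K ε).re = t) (hK : Continuous K) (hK0 : K 0 = t)
      (hL : Tendsto (fun ε => log (a - K ε)) (𝓝[>] 0) (𝓝 L)) :
      Tendsto (fun ε => Φ (K ε)) (𝓝[>] 0) (𝓝 (1 / (2 * Real.pi * I) *
        ((∫ X in a..b, (χ X - χ t) / ((X : ℂ) - t)) + χ t * (Real.log (b - t) - L)))) :=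
    ((tendsto_integral_div_ofReal_sub (l := 𝓝[>] 0) hχ hc hlam.1 hχt htb
      (eventually_nhdsWithin_of_forall hKim) (.of_forall hKre)
      (tendsto_nhdsWithin_of_tendsto_nhds (hK.tendsto' _ _ hK0)) hL).const_mul _).congr'
      (eventually_nhdsWithin_of_forall fun ε hε =>
        (hΦ _ (notMem_image_ofReal_of_im_ne_zero (hKim ε hε) _)).symm)
  have hπ : (2 * Real.pi * I : ℂ) ≠ 0 := by simp [Real.pi_ne_zero]
  refine ⟨_, tendsto_integral_div_ofReal_sub_principalValue hat htb hχ
    (intervalIntegrable_sub_div_ofReal_sub hχ hc hlam.1 hχt), ?_, ?_⟩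
  · convert hboundary (K := fun ε : ℝ => t + ε * I) (fun ε hε => by simpa using hε.ne')
      (fun ε => by simp) (by fun_prop) (by simp) (tendsto_log_ofReal_sub_add_mul_I hat) using 2
    field_simp
    ring
  · convert hboundary (K := fun ε : ℝ => t - ε * I) (fun ε hε => by simpa using hε.ne')
      (fun ε => by simp) (by fun_prop) (by simp) (tendsto_log_ofReal_sub_sub_mul_I hat) using 2
    field_simp
    ring
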